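/- Let ℓ ≥ 2 be an integer, m ∈ ℝ, and let f ∈ C^∞(ℝ² × ℝ²) be quasi-homogeneous of degree m, i.e. f(λx, λ^ℓ ξ) = λ^m f(x,ξ) for all λ > 0 and (x,ξ) ≠ (0,0). Then for all multi-indices α, β ∈ ℕ² there exists C_{α,β} > 0 such that |∂_x^α ∂_ξ^β f(x,ξ)| ≤ C_{α,β} · k₀(x,ξ)^{(m − |α| − ℓ|β|)/(ℓ+1)} for all (x,ξ) ∈ ℝ² × ℝ². -/

import Mathlib

open Real

noncomputable section

abbrev E2 := EuclideanSpace ℝ (Fin 2)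
abbrev Phase := E2 × E2

/-- `k₀(x,ξ) = (1 + ‖x‖^{2ℓ} + ‖ξ‖²)^{(ℓ+1)/(2ℓ)}`. -/
noncomputable def k0 (ℓ : ℕ) (p : Phase) : ℝ :=
  (1 + ‖p.1‖ ^ (2 * ℓ) + ‖p.2‖ ^ 2) ^ (((ℓ : ℝ) + 1) / (2 * (ℓ : ℝ)))

/-- Directional derivative operator in the direction `v`. -/
noncomputable def pdir (v : Phase) (f : Phase → ℝ) : Phase → ℝ :=
  fun p => fderiv ℝ f p v

/-- The mixed partial derivative `∂_x^α ∂_ξ^β f`. -/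
noncomputable def mixedPartial (α β : Fin 2 → ℕ) (f : Phase → ℝ) : Phase → ℝ :=
  (pdir ((EuclideanSpace.single 0 1 : E2), 0))^[α 0] <|
  (pdir ((EuclideanSpace.single 1 1 : E2), 0))^[α 1] <|
  (pdir ((0 : E2), (EuclideanSpace.single 0 1 : E2)))^[β 0] <|
  (pdir ((0 : E2), (EuclideanSpace.single 1 1 : E2)))^[β 1] f

lemma pdir_contDiff (v : Phase) {g : Phase → ℝ} (hg : ContDiff ℝ (⊤ : ℕ∞) g) :
    ContDiff ℝ (⊤ : ℕ∞) (pdir v g) :=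
  (hg.fderiv_right (by simp)).clm_apply contDiff_const

def QH (ℓ : ℕ) (m' : ℝ) (g : Phase → ℝ) : Prop :=
  ∀ lam : ℝ, 0 < lam → ∀ p : Phase, p ≠ 0 →
    g (lam • p.1, lam ^ ℓ • p.2) = lam ^ m' * g p

lemma QH.pdir_step {ℓ : ℕ} {m' : ℝ} {g : Phase → ℝ} (hg : ContDiff ℝ (⊤ : ℕ∞) g)
    (hq : QH ℓ m' g) (v : Phase) (d : ℕ)
    (hv : ∀ lam : ℝ, 0 < lam → ((lam • v.1, lam ^ ℓ • v.2) : Phase) = lam ^ d • v) :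
    QH ℓ (m' - d) (pdir v g) := by
  intro lam hlam p hp
  set L : Phase →L[ℝ] Phase :=
    (lam • ContinuousLinearMap.id ℝ E2).prodMap ((lam ^ ℓ) • ContinuousLinearMap.id ℝ E2) with hL
  have hLapp : ∀ q : Phase, L q = (lam • q.1, lam ^ ℓ • q.2) := by
    intro q; rfl
  have hU : IsOpen {q : Phase | q ≠ 0} := isOpen_ne
  have hev : (fun q => g (L q)) =ᶠ[nhds p] (fun q => lam ^ m' * g q) := by
    filter_upwards [hU.mem_nhds hp] with q hq'
    rw [hLapp]; exact hq lam hlam q hq'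
  have hdiff : DifferentiableAt ℝ g (L p) := (hg.differentiable (by simp)).differentiableAt
  have hcomp : fderiv ℝ (fun q => g (L q)) p = (fderiv ℝ g (L p)).comp L := by
    have := fderiv_comp p hdiff L.differentiableAt
    simp only [L.fderiv] at this; exact this
  have hrhs : fderiv ℝ (fun q => lam ^ m' * g q) p = lam ^ m' • fderiv ℝ g p := by
    have h0 : HasFDerivAt g (fderiv ℝ g p) p :=
      ((hg.differentiable (by simp)).differentiableAt).hasFDerivAt
    exact (h0.const_mul (lam ^ m')).fderiv
  have hkey : fderiv ℝ g (L p) (L v) = lam ^ m' * fderiv ℝ g p v := by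
    have := hev.fderiv_eq (𝕜 := ℝ)
    rw [hcomp, hrhs] at this
    have := congrFun (congrArg (fun (T : Phase →L[ℝ] ℝ) => (T : Phase → ℝ)) this) v
    simpa using this
  have hLv : L v = lam ^ d • v := by rw [hLapp]; exact hv lam hlam
  have h2 : (lam : ℝ) ^ d * fderiv ℝ g (L p) v = lam ^ m' * fderiv ℝ g p v := by
    rw [← hkey, hLv]; simp [mul_comm]
  have hld : (0:ℝ) < lam ^ d := pow_pos hlam d
  have : fderiv ℝ g (L p) v = lam ^ m' / lam ^ d * fderiv ℝ g p v := by
    field_simp at h2 ⊢; linarith [h2]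
  have hfin : lam ^ (m' - (d:ℝ)) = lam ^ m' / lam ^ d := by
    rw [Real.rpow_sub hlam, Real.rpow_natCast]
  rw [show ((lam • p.1, lam ^ ℓ • p.2) : Phase) = L p from (hLapp p).symm]
  simp only [pdir]
  rw [this, hfin]

lemma QH.pdir_iter {ℓ : ℕ} {m' : ℝ} {g : Phase → ℝ} (hg : ContDiff ℝ (⊤ : ℕ∞) g)
    (hq : QH ℓ m' g) (v : Phase) (d : ℕ)
    (hv : ∀ lam : ℝ, 0 < lam → ((lam • v.1, lam ^ ℓ • v.2) : Phase) = lam ^ d • v) :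
    ∀ n : ℕ, ContDiff ℝ (⊤ : ℕ∞) ((pdir v)^[n] g) ∧
      QH ℓ (m' - (n : ℝ) * (d : ℝ)) ((pdir v)^[n] g) := by
  intro n
  induction n with
  | zero => simpa using ⟨hg, hq⟩
  | succ n ih =>
    rw [Function.iterate_succ_apply']
    obtain ⟨ihs, ihq⟩ := ih
    refine ⟨pdir_contDiff v ihs, ?_⟩
    have hstep := QH.pdir_step ihs ihq v d hv
    have hdeg : m' - ((n + 1 : ℕ) : ℝ) * (d : ℝ) = m' - (n : ℝ) * (d : ℝ) - (d : ℝ) := by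
      push_cast; ring
    rw [hdeg]
    exact hstep

lemma QH.bound {ℓ : ℕ} (hl : 0 < ℓ) {m' : ℝ} {g : Phase → ℝ} (hg : Continuous g)
    (hq : QH ℓ m' g) :
    ∃ C : ℝ, 0 < C ∧ ∀ p : Phase,
      |g p| ≤ C * (1 + ‖p.1‖ ^ (2 * ℓ) + ‖p.2‖ ^ 2) ^ (m' / (2 * (ℓ:ℝ))) := by
  set s : Phase → ℝ := fun p => ‖p.1‖ ^ (2 * ℓ) + ‖p.2‖ ^ 2 with hs
  have hs0 : ∀ p, 0 ≤ s p := fun p => by positivity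
  have hscont : Continuous s := by
    apply Continuous.add
    · exact (continuous_norm.comp continuous_fst).pow _
    · exact (continuous_norm.comp continuous_snd).pow _
  have h2l : (2 * ℓ) ≠ 0 := by omega
  set K : Set Phase := s ⁻¹' Set.Iic 1 with hK
  have hKc : IsClosed K := isClosed_Iic.preimage hscont
  have hKsub : K ⊆ Metric.closedBall 0 1 := by
    intro p hp
    have hp' : s p ≤ 1 := hp
    have hA : (0:ℝ) ≤ ‖p.1‖ ^ (2 * ℓ) := by positivity
    have hB : (0:ℝ) ≤ ‖p.2‖ ^ 2 := by positivity
    have h1 : ‖p.1‖ ^ (2 * ℓ) ≤ 1 := by simp only [hs] at hp'; nlinarith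
    have h2 : ‖p.2‖ ^ 2 ≤ 1 := by simp only [hs] at hp'; nlinarith
    have hn1 : ‖p.1‖ ≤ 1 := (pow_le_one_iff_of_nonneg (norm_nonneg _) h2l).mp h1
    have hn2 : ‖p.2‖ ≤ 1 := (pow_le_one_iff_of_nonneg (norm_nonneg _) (by norm_num)).mp h2
    have hnp : ‖p‖ ≤ 1 := by rw [Prod.norm_def]; exact max_le hn1 hn2
    simpa [Metric.mem_closedBall, dist_zero_right] using hnp
  have hKcomp : IsCompact K :=
    (isCompact_closedBall (0 : Phase) 1).of_isClosed_subset hKc hKsub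
  have hKne : K.Nonempty := ⟨0, by simp [hK, hs, zero_pow h2l]⟩
  obtain ⟨z, hz, hmax'⟩ :=
    hKcomp.exists_isMaxOn hKne ((continuous_abs.comp hg).continuousOn)
  have hmax : ∀ q ∈ K, |g q| ≤ |g z| := fun q hq' => hmax' hq'
  set M := |g z| with hM
  have hM0 : 0 ≤ M := abs_nonneg _
  set e : ℝ := m' / (2 * (ℓ:ℝ)) with he
  set C : ℝ := (M + 1) * (2:ℝ) ^ |e| with hC
  have h2pos : (0:ℝ) < (2:ℝ) ^ |e| := rpow_pos_of_pos two_pos _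
  have hCpos : 0 < C := by positivity
  have h2ge1 : (1:ℝ) ≤ (2:ℝ) ^ |e| := by
    calc (1:ℝ) = (2:ℝ) ^ (0:ℝ) := by simp
    _ ≤ (2:ℝ) ^ |e| := rpow_le_rpow_of_exponent_le one_le_two (abs_nonneg e)
  refine ⟨C, hCpos, fun p => ?_⟩
  have hsum : (1 + ‖p.1‖ ^ (2 * ℓ) + ‖p.2‖ ^ 2) = 1 + s p := by
    simp only [hs]; ring
  rw [hsum]
  rcases le_or_gt (s p) 1 with hsp | hsp
  · -- small: p in compact set
    have hb1 : (1:ℝ) ≤ 1 + s p := by linarith [hs0 p]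
    have hb2 : 1 + s p ≤ 2 := by linarith
    have hp1 : (2:ℝ) ^ (-|e|) ≤ (1 + s p) ^ e := by
      rcases le_or_gt 0 e with he' | he'
      · calc (2:ℝ) ^ (-|e|) ≤ 1 :=
              rpow_le_one_of_one_le_of_nonpos one_le_two (neg_nonpos.mpr (abs_nonneg e))
          _ = (1:ℝ) ^ e := (one_rpow e).symm
          _ ≤ (1 + s p) ^ e := rpow_le_rpow zero_le_one hb1 he'
      · rw [abs_of_neg he', neg_neg]
        exact Real.rpow_le_rpow_of_nonpos (by linarith) hb2 he'.le
    have h1 : |g p| ≤ M := hmax p hsp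
    have h2 : C * (2:ℝ) ^ (-|e|) = M + 1 := by
      rw [hC, mul_assoc, ← Real.rpow_add two_pos]
      simp
    calc |g p| ≤ M := h1
      _ ≤ M + 1 := by linarith
      _ = C * (2:ℝ) ^ (-|e|) := h2.symm
      _ ≤ C * (1 + s p) ^ e := by
          exact mul_le_mul_of_nonneg_left hp1 hCpos.le
  · -- large: scale into K
    have hsppos : (0:ℝ) < s p := by linarith
    have hp0 : p ≠ 0 := by
      intro h
      rw [h] at hsp
      simp [hs, zero_pow h2l] at hsp
      linarith
    set lam : ℝ := (s p) ^ (-(1:ℝ) / (2 * (ℓ:ℝ))) with hlamdef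
    have hlam : 0 < lam := rpow_pos_of_pos hsppos _
    have h2lr : (0:ℝ) < 2 * (ℓ:ℝ) := by positivity
    have hlampow : lam ^ (2 * ℓ) = (s p)⁻¹ := by
      rw [hlamdef, ← Real.rpow_natCast ((s p) ^ (-(1:ℝ) / (2 * (ℓ:ℝ)))) (2*ℓ),
        ← Real.rpow_mul hsppos.le]
      have : -(1:ℝ) / (2 * (ℓ:ℝ)) * ((2*ℓ : ℕ) : ℝ) = -1 := by
        push_cast; field_simp
      rw [this, Real.rpow_neg_one]
    have hsq : s (lam • p.1, lam ^ ℓ • p.2) = 1 := by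
      have hn1 : ‖lam • p.1‖ = lam * ‖p.1‖ := by
        rw [norm_smul, Real.norm_eq_abs, abs_of_pos hlam]
      have hn2 : ‖lam ^ ℓ • p.2‖ = lam ^ ℓ * ‖p.2‖ := by
        rw [norm_smul, Real.norm_eq_abs, abs_of_pos (pow_pos hlam ℓ)]
      have : s (lam • p.1, lam ^ ℓ • p.2) = lam ^ (2*ℓ) * s p := by
        simp only [hs, hn1, hn2, mul_pow]
        ring_nf
      rw [this, hlampow, inv_mul_cancel₀ (ne_of_gt hsppos)]
    have hmem : ((lam • p.1, lam ^ ℓ • p.2) : Phase) ∈ K := by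
      simp only [hK, Set.mem_preimage, Set.mem_Iic, hsq]; norm_num
    have hgq : |g (lam • p.1, lam ^ ℓ • p.2)| ≤ M := hmax _ hmem
    have hlamm : lam ^ m' = (s p) ^ (-e) := by
      rw [hlamdef, ← Real.rpow_mul hsppos.le, he]
      congr 1
      field_simp
    have hgp : |g p| ≤ M * (s p) ^ e := by
      have heq := hq lam hlam p hp0
      have : |g (lam • p.1, lam ^ ℓ • p.2)| = lam ^ m' * |g p| := by
        rw [heq, abs_mul, abs_of_pos (rpow_pos_of_pos hlam m')]
      rw [this] at hgq
      rw [hlamm] at hgq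
      have hinv : (s p) ^ (-e) = ((s p) ^ e)⁻¹ := Real.rpow_neg hsppos.le e
      rw [hinv] at hgq
      have hepos : (0:ℝ) < (s p) ^ e := rpow_pos_of_pos hsppos e
      calc |g p| = ((s p) ^ e)⁻¹ * |g p| * (s p) ^ e := by field_simp
        _ ≤ M * (s p) ^ e := mul_le_mul_of_nonneg_right hgq hepos.le
    have hkey : (s p) ^ e ≤ (2:ℝ) ^ |e| * (1 + s p) ^ e := by
      rcases le_or_gt 0 e with he' | he'
      · have h1 : (s p) ^ e ≤ (1 + s p) ^ e :=
          rpow_le_rpow hsppos.le (by linarith) he'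
        have h2 : (0:ℝ) ≤ (1 + s p) ^ e := (rpow_pos_of_pos (by linarith) e).le
        nlinarith
      · have hle : 1 + s p ≤ 2 * s p := by linarith
        have h1 : (2 * s p) ^ e ≤ (1 + s p) ^ e :=
          Real.rpow_le_rpow_of_nonpos (by linarith) hle he'.le
        have h2 : (2 * s p) ^ e = (2:ℝ) ^ e * (s p) ^ e :=
          Real.mul_rpow (by norm_num) hsppos.le
        have habs : |e| = -e := abs_of_neg he'
        have h3 : (2:ℝ) ^ |e| * (2:ℝ) ^ e = 1 := by
          rw [habs, ← Real.rpow_add two_pos]; simp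
        calc (s p) ^ e = (2:ℝ) ^ |e| * ((2:ℝ) ^ e * (s p) ^ e) := by
              rw [← mul_assoc, h3, one_mul]
          _ = (2:ℝ) ^ |e| * (2 * s p) ^ e := by rw [h2]
          _ ≤ (2:ℝ) ^ |e| * (1 + s p) ^ e :=
              mul_le_mul_of_nonneg_left h1 h2pos.le
    calc |g p| ≤ M * (s p) ^ e := hgp
      _ ≤ M * ((2:ℝ) ^ |e| * (1 + s p) ^ e) :=
          mul_le_mul_of_nonneg_left hkey hM0
      _ = (M * (2:ℝ) ^ |e|) * (1 + s p) ^ e := by ring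
      _ ≤ C * (1 + s p) ^ e := by
          have : (0:ℝ) ≤ (1 + s p) ^ e := (rpow_pos_of_pos (by linarith) e).le
          have hMC : M * (2:ℝ) ^ |e| ≤ C := by
            rw [hC]; nlinarith
          exact mul_le_mul_of_nonneg_right hMC this

/-- A smooth function, quasi-homogeneous of degree `m`, satisfies the symbol estimates
`|∂_x^α ∂_ξ^β f| ≤ C_{α,β} k₀^{(m − |α| − ℓ|β|)/(ℓ+1)}`. -/
theorem stmt8 (ℓ : ℕ) (hℓ : 2 ≤ ℓ) (m : ℝ) (f : Phase → ℝ)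
    (hf : ContDiff ℝ (⊤ : ℕ∞) f)
    (hqh : ∀ lam : ℝ, 0 < lam → ∀ p : Phase, p ≠ 0 →
      f (lam • p.1, lam ^ ℓ • p.2) = lam ^ m * f p) :
    ∀ α β : Fin 2 → ℕ, ∃ C : ℝ, 0 < C ∧ ∀ p : Phase,
      |mixedPartial α β f p| ≤
        C * k0 ℓ p ^ ((m - ((α 0 : ℝ) + (α 1 : ℝ))
          - (ℓ : ℝ) * ((β 0 : ℝ) + (β 1 : ℝ))) / ((ℓ : ℝ) + 1)) := by
  intro α β
  have hl : 0 < ℓ := by omega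
  have hvx : ∀ e : E2, ∀ lam : ℝ, 0 < lam →
      ((lam • (e, (0:E2)).1, lam ^ ℓ • (e, (0:E2)).2) : Phase) = lam ^ 1 • (e, (0:E2)) := by
    intro e lam _
    simp [Prod.smul_mk]
  have hvxi : ∀ e : E2, ∀ lam : ℝ, 0 < lam →
      ((lam • ((0:E2), e).1, lam ^ ℓ • ((0:E2), e).2) : Phase) = lam ^ ℓ • ((0:E2), e) := by
    intro e lam _
    simp [Prod.smul_mk]
  -- apply the four iterations from the inside out
  have h4 := QH.pdir_iter hf hqh ((0 : E2), (EuclideanSpace.single 1 1 : E2)) ℓ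
    (hvxi _) (β 1)
  have h3 := QH.pdir_iter h4.1 h4.2 ((0 : E2), (EuclideanSpace.single 0 1 : E2)) ℓ
    (hvxi _) (β 0)
  have h2 := QH.pdir_iter h3.1 h3.2 ((EuclideanSpace.single 1 1 : E2), 0) 1
    (hvx _) (α 1)
  have h1 := QH.pdir_iter h2.1 h2.2 ((EuclideanSpace.single 0 1 : E2), 0) 1
    (hvx _) (α 0)
  have hgq := h1.2
  have hgc := h1.1.continuous
  obtain ⟨C, hC, hb⟩ := QH.bound hl hgc hgq
  refine ⟨C, hC, fun p => ?_⟩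
  have hbase : (0:ℝ) ≤ 1 + ‖p.1‖ ^ (2 * ℓ) + ‖p.2‖ ^ 2 := by positivity
  have hM : m - (β 1 : ℝ) * (ℓ : ℝ) - (β 0 : ℝ) * (ℓ : ℝ)
      - (α 1 : ℝ) * ((1 : ℕ) : ℝ) - (α 0 : ℝ) * ((1 : ℕ) : ℝ)
      = m - ((α 0 : ℝ) + (α 1 : ℝ)) - (ℓ : ℝ) * ((β 0 : ℝ) + (β 1 : ℝ)) := by
    push_cast; ring
  have hk0 : k0 ℓ p ^ ((m - ((α 0 : ℝ) + (α 1 : ℝ))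
        - (ℓ : ℝ) * ((β 0 : ℝ) + (β 1 : ℝ))) / ((ℓ : ℝ) + 1))
      = (1 + ‖p.1‖ ^ (2 * ℓ) + ‖p.2‖ ^ 2) ^ ((m - ((α 0 : ℝ) + (α 1 : ℝ))
        - (ℓ : ℝ) * ((β 0 : ℝ) + (β 1 : ℝ))) / (2 * (ℓ:ℝ))) := by
    rw [k0, ← Real.rpow_mul hbase]
    congr 1
    have hℓ0 : (ℓ:ℝ) ≠ 0 := by positivity
    have hℓ1 : (ℓ:ℝ) + 1 ≠ 0 := by positivity
    field_simp
  rw [hk0]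
  have hfin := hb p
  rw [hM] at hfin
  exact hfin
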